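/- Let (X, d) be a metric space, μ a Borel measure on X, x ∈ X, and n ≥ 1. Assume 0 < μ(B(x,r)) < ∞ for every r > 0 and the volume doubling property at x: μ(B(x,R)) ≤ (R/r)ⁿ μ(B(x,r)) for all 0 < r ≤ R. Then for every σ ∈ (0,2) and every R > 0, ∫_{X∖B(x,R)} (2−σ) R² / (μ(B(x, d(x,z))) · d(x,z)^σ) dμ(z) ≤ 2ⁿ · (2−σ)/(1 − 2^{−σ}) · R^{2−σ}. -/

import Mathlib

/-!
Cover `X ∖ B(x,R)` by the dyadic annuli `A_k = B(x,2^(k+1)R) ∖ B(x,2^k R)`. On `A_k` the kernel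
is at most `(2-σ)R² / ((2^k R)^σ μ(B(x,2^k R)))`, and doubling gives
`μ(A_k) ≤ 2ⁿ μ(B(x,2^k R))`, so the integral over `A_k` is at most
`2ⁿ (2-σ) R^(2-σ) (2^(-σ))^k`. Summing the geometric series gives the bound.
-/

open MeasureTheory Metric

/-- No condition on `m` is needed: `m * (c / m) ≤ c` holds in `ℝ≥0∞` also for `m = 0` and
`m = ∞`. -/
theorem setLIntegral_le_mul_of_le_div {α : Type*} [MeasurableSpace α] {μ : Measure α}
    {s : Set α} (hs : MeasurableSet s) {f : α → ENNReal} {c m D : ENNReal}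
    (hf : ∀ z ∈ s, f z ≤ c / m) (hμs : μ s ≤ D * m) :
    ∫⁻ z in s, f z ∂μ ≤ D * c :=
  calc ∫⁻ z in s, f z ∂μ ≤ ∫⁻ _ in s, c / m ∂μ := setLIntegral_mono' hs hf
    _ = c / m * μ s := setLIntegral_const s _
    _ ≤ c / m * (D * m) := by gcongr
    _ = D * (m * (c / m)) := by ring
    _ ≤ D * c := by gcongr; exact ENNReal.mul_div_le

theorem sq_div_rpow_two_pow_mul {R : ℝ} (hR : 0 < R) (σ : ℝ) (k : ℕ) :
    R ^ 2 / (2 ^ k * R) ^ σ = R ^ (2 - σ) * ((2 : ℝ) ^ (-σ)) ^ k := by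
  rw [Real.mul_rpow (by positivity) hR.le, ← Real.rpow_natCast (2 : ℝ) k,
    ← Real.rpow_mul zero_le_two, ← Real.rpow_natCast _ k, ← Real.rpow_mul zero_le_two,
    Real.rpow_sub hR, Real.rpow_two, neg_mul, Real.rpow_neg zero_le_two, mul_comm σ]
  field_simp

theorem tsum_ofReal_mul_geometric {a q : ℝ} (ha : 0 ≤ a) (hq : 0 ≤ q) (hq1 : q < 1) :
    ∑' k : ℕ, ENNReal.ofReal (a * q ^ k) = ENNReal.ofReal (a / (1 - q)) := by
  rw [← ENNReal.ofReal_tsum_of_nonneg (fun k => by positivity)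
    ((summable_geometric_of_lt_one hq hq1).mul_left a), tsum_mul_left,
    tsum_geometric_of_lt_one hq hq1, div_eq_mul_inv]

section DyadicAnnuli

variable {X : Type*} [PseudoMetricSpace X]

def dyadicAnnulus (x : X) (R : ℝ) (k : ℕ) : Set X :=
  ball x (2 ^ (k + 1) * R) \ ball x (2 ^ k * R)

theorem le_dist_of_mem_dyadicAnnulus {x z : X} {R : ℝ} {k : ℕ}
    (hz : z ∈ dyadicAnnulus x R k) : 2 ^ k * R ≤ dist x z := by
  simpa [dist_comm, not_lt] using hz.2

theorem compl_ball_subset_iUnion_dyadicAnnulus (x : X) {R : ℝ} (hR : 0 < R) :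
    (ball x R)ᶜ ⊆ ⋃ k, dyadicAnnulus x R k := by
  intro z hz
  have hRz : 1 ≤ dist z x / R := by
    rw [one_le_div hR]; simpa using hz
  obtain ⟨k, hk, hk'⟩ := exists_nat_pow_near hRz one_lt_two
  refine Set.mem_iUnion.mpr ⟨k, ?_, ?_⟩
  · rw [mem_ball]; exact (div_lt_iff₀ hR).mp hk'
  · rw [mem_ball, not_lt]; exact (le_div_iff₀ hR).mp hk

variable [MeasurableSpace X]

theorem measure_ball_two_mul_le {μ : Measure X} {x : X} {n : ℕ}
    (hdoub : ∀ r R : ℝ, 0 < r → r ≤ R →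
      μ (ball x R) ≤ ENNReal.ofReal ((R / r) ^ n) * μ (ball x r))
    {r : ℝ} (hr : 0 < r) :
    μ (ball x (2 * r)) ≤ ENNReal.ofReal (2 ^ n) * μ (ball x r) := by
  simpa [hr.ne'] using hdoub r (2 * r) hr (by linarith)

theorem ofReal_div_rpow_div_measure_ball_antitone (μ : Measure X) (x : X) {a σ : ℝ}
    (ha : 0 ≤ a) (hσ : 0 ≤ σ) {r s : ℝ} (hr : 0 < r) (hrs : r ≤ s) :
    ENNReal.ofReal (a / s ^ σ) / μ (ball x s)
      ≤ ENNReal.ofReal (a / r ^ σ) / μ (ball x r) := by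
  gcongr ENNReal.ofReal ?_ / μ ?_
  · exact div_le_div_of_nonneg_left ha (by positivity) (Real.rpow_le_rpow hr.le hrs hσ)
  · exact ball_subset_ball hrs

variable [OpensMeasurableSpace X]

theorem measurableSet_dyadicAnnulus (x : X) (R : ℝ) (k : ℕ) :
    MeasurableSet (dyadicAnnulus x R k) :=
  measurableSet_ball.diff measurableSet_ball

theorem setLIntegral_dyadicAnnulus_le {μ : Measure X} {x : X} {n : ℕ}
    (hdoub : ∀ r R : ℝ, 0 < r → r ≤ R →
      μ (ball x R) ≤ ENNReal.ofReal ((R / r) ^ n) * μ (ball x r))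
    {a σ : ℝ} (ha : 0 ≤ a) (hσ : 0 ≤ σ) {R : ℝ} (hR : 0 < R) (k : ℕ) :
    ∫⁻ z in dyadicAnnulus x R k,
        ENNReal.ofReal (a / dist x z ^ σ) / μ (ball x (dist x z)) ∂μ
      ≤ ENNReal.ofReal (2 ^ n) * ENNReal.ofReal (a / (2 ^ k * R) ^ σ) := by
  have hr : 0 < 2 ^ k * R := by positivity
  refine setLIntegral_le_mul_of_le_div (measurableSet_dyadicAnnulus x R k)
    (fun z hz => ofReal_div_rpow_div_measure_ball_antitone μ x ha hσ hr
      (le_dist_of_mem_dyadicAnnulus hz)) ?_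
  calc μ (dyadicAnnulus x R k) ≤ μ (ball x (2 * (2 ^ k * R))) := by
        gcongr; rw [← mul_assoc, ← pow_succ']; exact Set.sdiff_subset
    _ ≤ _ := measure_ball_two_mul_le hdoub hr

end DyadicAnnuli

theorem kernel_farfield_general {X : Type*} [MetricSpace X] [MeasurableSpace X] [BorelSpace X]
    (μ : Measure X) (x : X) (n : ℕ)
    (hdoub : ∀ r R : ℝ, 0 < r → r ≤ R →
      μ (ball x R) ≤ ENNReal.ofReal ((R / r) ^ n) * μ (ball x r))
    (σ : ℝ) (hσ : σ ∈ Set.Ioo (0 : ℝ) 2) (R : ℝ) (hR : 0 < R) :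
    ∫⁻ z in (ball x R)ᶜ,
        ENNReal.ofReal ((2 - σ) * R ^ 2 / dist x z ^ σ) / μ (ball x (dist x z)) ∂μ
      ≤ ENNReal.ofReal (2 ^ n * ((2 - σ) / (1 - 2 ^ (-σ))) * R ^ (2 - σ)) := by
  obtain ⟨hσ0, hσ2⟩ := hσ
  have hq1 : (2 : ℝ) ^ (-σ) < 1 := Real.rpow_lt_one_of_one_lt_of_neg one_lt_two (by linarith)
  calc _ ≤ ∫⁻ z in ⋃ k, dyadicAnnulus x R k,
          ENNReal.ofReal ((2 - σ) * R ^ 2 / dist x z ^ σ) / μ (ball x (dist x z)) ∂μ :=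
        lintegral_mono_set (compl_ball_subset_iUnion_dyadicAnnulus x hR)
    _ ≤ ∑' k, ∫⁻ z in dyadicAnnulus x R k,
          ENNReal.ofReal ((2 - σ) * R ^ 2 / dist x z ^ σ) / μ (ball x (dist x z)) ∂μ :=
        lintegral_iUnion_le _ _
    _ ≤ ∑' k : ℕ,
          ENNReal.ofReal (2 ^ n * (2 - σ) * R ^ (2 - σ) * ((2 : ℝ) ^ (-σ)) ^ k) := by
        gcongr with k
        refine (setLIntegral_dyadicAnnulus_le hdoub (by positivity) hσ0.le hR k).trans_eq ?_
        rw [← ENNReal.ofReal_mul (by positivity), mul_div_assoc, sq_div_rpow_two_pow_mul hR]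
        ring_nf
    _ = _ := by
        rw [tsum_ofReal_mul_geometric (by positivity) (by positivity) hq1]
        ring_nf

/-- **Far-field kernel estimate** (estimate (B_R_complement) inside Lemma 2.2 of the paper):
on a metric measure space with the doubling property at `x` with exponent `n`, for every
`σ ∈ (0,2)` and `R > 0`,
`∫_{X∖B(x,R)} (2−σ) R²/(μ(B(x,d(x,z))) d(x,z)^σ) dμ(z) ≤ 2ⁿ (2−σ)/(1−2^{−σ}) R^{2−σ}`. -/
theorem kernel_farfield {X : Type*} [MetricSpace X] [MeasurableSpace X] [BorelSpace X]
    (μ : Measure X) (x : X) (n : ℕ) (hn : 1 ≤ n)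
    (hpos : ∀ r : ℝ, 0 < r → 0 < μ (ball x r) ∧ μ (ball x r) < ⊤)
    (hdoub : ∀ r R : ℝ, 0 < r → r ≤ R →
      μ (ball x R) ≤ ENNReal.ofReal ((R / r) ^ n) * μ (ball x r))
    (σ : ℝ) (hσ : σ ∈ Set.Ioo (0 : ℝ) 2) (R : ℝ) (hR : 0 < R) :
    ∫⁻ z in (ball x R)ᶜ,
        ENNReal.ofReal ((2 - σ) * R ^ 2 / dist x z ^ σ) / μ (ball x (dist x z)) ∂μ
      ≤ ENNReal.ofReal (2 ^ n * ((2 - σ) / (1 - 2 ^ (-σ))) * R ^ (2 - σ)) :=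
  kernel_farfield_general μ x n hdoub σ hσ R hR
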